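/- Let A be a real symmetric matrix with eigendecomposition A = UΣUᵀ where U is orthogonal and Σ diagonal. Then the matrix UΣ₊Uᵀ, where (Σ₊)ᵢᵢ = max(Σᵢᵢ, 0), is the unique minimizer of ‖A − S‖_F over all symmetric positive semidefinite matrices S; i.e., it is the projection of A onto the positive semidefinite cone in Frobenius norm. -/

import Mathlib

/-!
Conjugating by the orthogonal matrix `U` preserves the Frobenius distance and the cone of positive
semidefinite matrices, so it suffices to project the diagonal matrix `Σ` onto that cone. A
positive semidefinite `T` has nonnegative diagonal, and `‖Σ - T‖²` splits into the diagonal part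
`∑ (σᵢ - tᵢᵢ)²` and the off-diagonal part `∑ tᵢⱼ²`. The first is minimized termwise, uniquely, at
`tᵢᵢ = max σᵢ 0`, and the second vanishes only when `T` is diagonal.
-/

open Matrix Finset

lemma sq_sub_max_zero_le {s t : ℝ} (ht : 0 ≤ t) : (s - max s 0) ^ 2 ≤ (s - t) ^ 2 := by
  rcases le_total 0 s with hs | hs
  · simpa [max_eq_left hs] using sq_nonneg (s - t)
  · rw [max_eq_right hs]; nlinarith

lemma eq_max_zero_of_sq_sub_eq {s t : ℝ} (ht : 0 ≤ t) (h : (s - t) ^ 2 = (s - max s 0) ^ 2) :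
    t = max s 0 := by
  rcases le_total 0 s with hs | hs
  · rw [max_eq_left hs, sub_self, zero_pow two_ne_zero, sq_eq_zero_iff, sub_eq_zero] at h
    rw [max_eq_left hs, h]
  · rw [max_eq_right hs] at h ⊢
    nlinarith

section SumSq

variable {ι R : Type*} [Fintype ι]

lemma sum_sum_sq_eq_trace_transpose_mul_self [CommSemiring R] (M : Matrix ι ι R) :
    ∑ i, ∑ j, M i j ^ 2 = (Mᵀ * M).trace := by
  simp only [trace, Matrix.diag, mul_apply, sq]
  exact Finset.sum_comm

variable [DecidableEq ι]

lemma sum_sum_sq_transpose_mul_mul_of_orthogonal [CommRing R] {U : Matrix ι ι R}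
    (hU : Uᵀ * U = 1) (M : Matrix ι ι R) :
    ∑ i, ∑ j, (Uᵀ * M * U) i j ^ 2 = ∑ i, ∑ j, M i j ^ 2 := by
  have hU' : U * Uᵀ = 1 := mul_eq_one_comm.mp hU
  simp only [sum_sum_sq_eq_trace_transpose_mul_self, transpose_mul, transpose_transpose,
    Matrix.mul_assoc]
  rw [← Matrix.mul_assoc U Uᵀ, hU', Matrix.one_mul, trace_mul_comm, Matrix.mul_assoc,
    Matrix.mul_assoc, hU', Matrix.mul_one]

lemma sum_sum_sq_sub_of_isDiag [CommRing R] {D : Matrix ι ι R} (hD : D.IsDiag)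
    (T : Matrix ι ι R) :
    ∑ i, ∑ j, (D - T) i j ^ 2 = ∑ i, (D i i - T i i) ^ 2 + ∑ i, ∑ j ∈ univ.erase i, T i j ^ 2 := by
  rw [← sum_add_distrib]
  refine sum_congr rfl fun i _ => ?_
  rw [← add_sum_erase _ _ (mem_univ i)]
  congr 1
  refine sum_congr rfl fun j hj => ?_
  rw [Matrix.sub_apply, hD (ne_of_mem_erase hj).symm, zero_sub, neg_sq]

end SumSq

section DiagonalProjection

variable {ι : Type*} [Fintype ι] [DecidableEq ι] {D T : Matrix ι ι ℝ}

lemma sum_sum_sq_sub_diagonal_max_zero (hD : D.IsDiag) :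
    ∑ i, ∑ j, (D - diagonal fun k => max (D k k) 0) i j ^ 2 = ∑ i, (D i i - max (D i i) 0) ^ 2 := by
  have hoff : ∑ i, ∑ j ∈ univ.erase i, (diagonal fun k => max (D k k) 0) i j ^ 2 = 0 :=
    sum_eq_zero fun i _ => sum_eq_zero fun j hj => by
      rw [diagonal_apply_ne _ (ne_of_mem_erase hj).symm, zero_pow two_ne_zero]
  simp only [sum_sum_sq_sub_of_isDiag hD, hoff, add_zero, diagonal_apply_eq]

lemma sum_sum_sq_sub_diagonal_max_zero_le (hD : D.IsDiag) (hT : ∀ i, 0 ≤ T i i) :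
    ∑ i, ∑ j, (D - diagonal fun k => max (D k k) 0) i j ^ 2 ≤ ∑ i, ∑ j, (D - T) i j ^ 2 := by
  rw [sum_sum_sq_sub_diagonal_max_zero hD, sum_sum_sq_sub_of_isDiag hD]
  exact le_add_of_le_of_nonneg (sum_le_sum fun i _ => sq_sub_max_zero_le (hT i))
    (sum_nonneg fun i _ => sum_nonneg fun j _ => sq_nonneg _)

lemma eq_diagonal_max_zero_of_sum_sum_sq_sub_eq (hD : D.IsDiag) (hT : ∀ i, 0 ≤ T i i)
    (h : ∑ i, ∑ j, (D - T) i j ^ 2 = ∑ i, ∑ j, (D - diagonal fun k => max (D k k) 0) i j ^ 2) :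
    T = diagonal fun k => max (D k k) 0 := by
  rw [sum_sum_sq_sub_diagonal_max_zero hD, sum_sum_sq_sub_of_isDiag hD] at h
  have hdiag_le : ∑ i, (D i i - max (D i i) 0) ^ 2 ≤ ∑ i, (D i i - T i i) ^ 2 :=
    sum_le_sum fun i _ => sq_sub_max_zero_le (hT i)
  have hoff_nonneg : ∀ i, 0 ≤ ∑ j ∈ univ.erase i, T i j ^ 2 :=
    fun i => sum_nonneg fun j _ => sq_nonneg _
  have hoff : ∑ i, ∑ j ∈ univ.erase i, T i j ^ 2 = 0 := by
    linarith [sum_nonneg fun i (_ : i ∈ univ) => hoff_nonneg i]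
  have hdiag : ∀ i, (D i i - T i i) ^ 2 = (D i i - max (D i i) 0) ^ 2 := fun i =>
    ((sum_eq_sum_iff_of_le (f := fun i => (D i i - max (D i i) 0) ^ 2)
      (g := fun i => (D i i - T i i) ^ 2) fun i _ => sq_sub_max_zero_le (hT i)).mp
      (by linarith) i (mem_univ i)).symm
  ext i j
  rcases eq_or_ne i j with rfl | hij
  · rw [diagonal_apply_eq]
    exact eq_max_zero_of_sq_sub_eq (hT i) (hdiag i)
  · rw [diagonal_apply_ne _ hij]
    have := (sum_eq_zero_iff_of_nonneg fun i _ => hoff_nonneg i).mp hoff i (mem_univ i)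
    exact pow_eq_zero_iff two_ne_zero |>.mp <| (sum_eq_zero_iff_of_nonneg fun j _ => sq_nonneg _).mp
      this j (mem_erase.mpr ⟨hij.symm, mem_univ j⟩)

end DiagonalProjection

theorem psd_projection_spectral_general {n : ℕ} (A U Sig : Matrix (Fin n) (Fin n) ℝ)
    (hU : Uᵀ * U = 1) (hSig : Sig.IsDiag)
    (hdecomp : A = U * Sig * Uᵀ)
    (P : Matrix (Fin n) (Fin n) ℝ)
    (hP : P = U * (Matrix.diagonal fun i => max (Sig i i) 0) * Uᵀ) :
    (∀ S : Matrix (Fin n) (Fin n) ℝ, S.PosSemidef →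
        ∑ i, ∑ j, (A - P) i j ^ 2 ≤ ∑ i, ∑ j, (A - S) i j ^ 2) ∧
    (∀ S : Matrix (Fin n) (Fin n) ℝ, S.PosSemidef →
        ∑ i, ∑ j, (A - S) i j ^ 2 = ∑ i, ∑ j, (A - P) i j ^ 2 → S = P) := by
  have hU' : U * Uᵀ = 1 := mul_eq_one_comm.mp hU
  have conj_cancel : ∀ M, Uᵀ * (U * M * Uᵀ) * U = M := fun M => by
    simp only [Matrix.mul_assoc, hU, Matrix.mul_one, ← Matrix.mul_assoc Uᵀ U, Matrix.one_mul]
  have dist_eq : ∀ S, ∑ i, ∑ j, (A - S) i j ^ 2 = ∑ i, ∑ j, (Sig - Uᵀ * S * U) i j ^ 2 := by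
    intro S
    rw [← sum_sum_sq_transpose_mul_mul_of_orthogonal hU, Matrix.mul_sub, Matrix.sub_mul, hdecomp,
      conj_cancel]
  have hPU : Uᵀ * P * U = diagonal fun i => max (Sig i i) 0 := hP ▸ conj_cancel _
  have diag_nonneg : ∀ S : Matrix (Fin n) (Fin n) ℝ, S.PosSemidef → ∀ i, 0 ≤ (Uᵀ * S * U) i i :=
    fun S hS i => by simpa using (hS.conjTranspose_mul_mul_same U).diag_nonneg (i := i)
  refine ⟨fun S hS => ?_, fun S hS h => ?_⟩
  · rw [dist_eq, dist_eq, hPU]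
    exact sum_sum_sq_sub_diagonal_max_zero_le hSig (diag_nonneg S hS)
  · rw [dist_eq, dist_eq, hPU] at h
    calc S = U * (Uᵀ * S * U) * Uᵀ := by
          simp only [Matrix.mul_assoc, hU', Matrix.mul_one, ← Matrix.mul_assoc U Uᵀ, Matrix.one_mul]
      _ = P := by rw [eq_diagonal_max_zero_of_sum_sum_sq_sub_eq hSig (diag_nonneg S hS) h, hP]

theorem psd_projection_spectral {n : ℕ} (A U Sig : Matrix (Fin n) (Fin n) ℝ)
    (hAsym : Aᵀ = A) (hU : Uᵀ * U = 1) (hSig : Sig.IsDiag)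
    (hdecomp : A = U * Sig * Uᵀ)
    (P : Matrix (Fin n) (Fin n) ℝ)
    (hP : P = U * (Matrix.diagonal fun i => max (Sig i i) 0) * Uᵀ) :
    (∀ S : Matrix (Fin n) (Fin n) ℝ, S.PosSemidef →
        ∑ i, ∑ j, (A - P) i j ^ 2 ≤ ∑ i, ∑ j, (A - S) i j ^ 2) ∧
    (∀ S : Matrix (Fin n) (Fin n) ℝ, S.PosSemidef →
        ∑ i, ∑ j, (A - S) i j ^ 2 = ∑ i, ∑ j, (A - P) i j ^ 2 → S = P) :=
  psd_projection_spectral_general A U Sig hU hSig hdecomp P hP
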